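/- Suppose f admits the Lévy–Khinchine representation with pair (γ, G), where γ ∈ ℝ and G is a finite signed Borel measure on ℝ satisfying ∫_ℝ (1+x²) d|G|(x) < ∞. Then Ln f is twice differentiable on ℝ and (Ln f)''(t) = −∫_ℝ e^{itx}(1+x²) dG(x) for every t ∈ ℝ. -/

import Mathlib

open MeasureTheory Complex Filter Finset

/-- Characteristic function of a Borel measure on ℝ. -/
noncomputable def charFun (μ : MeasureTheory.Measure ℝ) (t : ℝ) : ℂ :=
  ∫ x, Complex.exp (Complex.I * t * x) ∂μ

/-- `g` is the distinguished logarithm of `f`: continuous, `g 0 = 0`, `exp ∘ g = f`. -/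
def IsDistinguishedLog (g f : ℝ → ℂ) : Prop :=
  Continuous g ∧ g 0 = 0 ∧ ∀ t : ℝ, Complex.exp (g t) = f t

/-- Integral of a complex function against a finite signed measure, via the
Jordan decomposition. -/
noncomputable def sInt (G : MeasureTheory.SignedMeasure ℝ) (φ : ℝ → ℂ) : ℂ :=
  (∫ x, φ x ∂G.toJordanDecomposition.posPart) -
    (∫ x, φ x ∂G.toJordanDecomposition.negPart)

/-- The Lévy–Khinchine integrand `K(t,x) = (e^{itx} - 1 - it sin x)(1+x²)/x²`,
with value `-t²/2` at `x = 0`. -/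
noncomputable def Kfun (t x : ℝ) : ℂ :=
  if x = 0 then -(t ^ 2) / 2
  else (Complex.exp (Complex.I * t * x) - 1 - Complex.I * t * Real.sin x) * (1 + x ^ 2) / x ^ 2

/-- The kernel `C(h,x) = (cos(hx) - 1)(1+x²)/x²`, with value `-h²/2` at `x = 0`. -/
noncomputable def Cfun (h x : ℝ) : ℂ :=
  if x = 0 then -(h ^ 2) / 2
  else ((Real.cos (h * x) - 1) * (1 + x ^ 2) / x ^ 2 : ℝ)

/-- `g` (the distinguished logarithm of `f`) is represented by the Lévy–Khinchine
formula with spectral pair `(γ, G)`. -/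
def HasLK (g : ℝ → ℂ) (γ : ℝ) (G : MeasureTheory.SignedMeasure ℝ) : Prop :=
  ∀ t : ℝ, g t = Complex.I * t * γ + sInt G (Kfun t)

/-- Symmetric second finite difference of `g` with step `h`. -/
def delta2 (g : ℝ → ℂ) (h t : ℝ) : ℂ := g (t - h) + g (t + h) - 2 * g t

/-- `n`-fold convolution power of a measure on ℝ. -/
noncomputable def convPow (ν : MeasureTheory.Measure ℝ) : ℕ → MeasureTheory.Measure ℝ
  | 0 => MeasureTheory.Measure.dirac 0
  | n + 1 => (convPow ν n).conv ν

/-- A probability measure `μ` on ℝ is infinitely divisible. -/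
def IsInfDiv (μ : MeasureTheory.Measure ℝ) : Prop :=
  ∀ n : ℕ, 0 < n → ∃ ν : MeasureTheory.Measure ℝ,
    MeasureTheory.IsProbabilityMeasure ν ∧ convPow ν n = μ

/-- A probability measure `μ` on ℝ is rationally infinitely divisible:
`μ₁ = μ ∗ μ₂` for some infinitely divisible probability measures `μ₁, μ₂`. -/
def IsRatInfDiv (μ : MeasureTheory.Measure ℝ) : Prop :=
  ∃ μ₁ μ₂ : MeasureTheory.Measure ℝ,
    MeasureTheory.IsProbabilityMeasure μ₁ ∧ MeasureTheory.IsProbabilityMeasure μ₂ ∧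
    IsInfDiv μ₁ ∧ IsInfDiv μ₂ ∧ μ₁ = μ.conv μ₂

/-!
Differentiate twice under the integral sign, separately against the positive and negative parts
of the Jordan decomposition of `G`. All three functions `K(t,x)`, `∂ₜK(t,x)` and
`∂ₜ²K(t,x) = -e^{itx}(1+x²)` are dominated by multiples of `1 + x²`, locally uniformly in `t`:
the last one trivially, the other two by the mean value theorem started at `t = 0`, where
`K(0,x) = 0` and `∂ₜK(0,x) = i(x - sin x)(1+x²)/x²` with `|x - sin x| ≤ x²`.
-/

noncomputable def KfunDeriv (t x : ℝ) : ℂ :=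
  if x = 0 then -t
  else (I * x * cexp (I * t * x) - I * Real.sin x) * (1 + x ^ 2) / x ^ 2

lemma hasDerivAt_cexp_I_mul_ofReal_mul (t x : ℝ) :
    HasDerivAt (fun s : ℝ => cexp (I * s * x)) (I * x * cexp (I * t * x)) t := by
  have h := (((hasDerivAt_id t).ofReal_comp.const_mul I).mul_const (x : ℂ)).cexp
  refine h.congr_deriv ?_
  simp only [id, ofReal_one, mul_one]
  ring

lemma norm_cexp_I_mul_ofReal_mul (t x : ℝ) : ‖cexp (I * t * x)‖ = 1 := by
  simp [Complex.norm_exp]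

lemma abs_sub_sin_le_sq (x : ℝ) : |x - Real.sin x| ≤ x ^ 2 := by
  have hcube := Real.abs_sub_sin_le x
  have hlin : |x - Real.sin x| ≤ 2 * |x| := by
    have := Real.abs_sin_sub_sin_le x 0
    rw [Real.sin_zero, sub_zero, sub_zero] at this
    calc |x - Real.sin x| ≤ |x| + |Real.sin x| := abs_sub _ _
    _ ≤ 2 * |x| := by linarith
  rw [← sq_abs x]
  rcases le_total |x| 2 with hx | hx
  · nlinarith [abs_nonneg x, pow_le_pow_left₀ (abs_nonneg x) hx 2]
  · nlinarith

lemma Kfun_zero_left (x : ℝ) : Kfun 0 x = 0 := by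
  simp [Kfun]

lemma hasDerivAt_Kfun (t x : ℝ) : HasDerivAt (Kfun · x) (KfunDeriv t x) t := by
  by_cases hx : x = 0
  · simp only [Kfun, KfunDeriv, if_pos hx]
    have h := ((hasDerivAt_id t).ofReal_comp.pow 2).neg.div_const 2
    refine h.congr_deriv ?_
    simp
    ring
  · simp only [Kfun, KfunDeriv, if_neg hx]
    have hlin := ((hasDerivAt_id t).ofReal_comp.const_mul I).mul_const (Real.sin x : ℂ)
    have h := ((((hasDerivAt_cexp_I_mul_ofReal_mul t x).sub_const 1).sub hlin).mul_const
      (1 + (x : ℂ) ^ 2)).div_const ((x : ℂ) ^ 2)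
    refine h.congr_deriv ?_
    simp

lemma hasDerivAt_KfunDeriv (t x : ℝ) :
    HasDerivAt (KfunDeriv · x) (-(cexp (I * t * x) * (1 + x ^ 2))) t := by
  by_cases hx : x = 0
  · simp only [KfunDeriv, if_pos hx]
    refine (hasDerivAt_id t).ofReal_comp.neg.congr_deriv ?_
    simp [hx]
  · simp only [KfunDeriv, if_neg hx]
    have h := ((((hasDerivAt_cexp_I_mul_ofReal_mul t x).const_mul (I * x)).sub_const
      (I * Real.sin x)).mul_const (1 + (x : ℂ) ^ 2)).div_const ((x : ℂ) ^ 2)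
    refine h.congr_deriv ?_
    have hx' : (x : ℂ) ≠ 0 := ofReal_ne_zero.mpr hx
    have hI : I * x * (I * x * cexp (I * t * x)) = -(x ^ 2 * cexp (I * t * x)) := by
      linear_combination (x ^ 2 * cexp (I * t * x)) * I_sq
    rw [hI]
    field_simp

lemma norm_neg_cexp_I_mul_ofReal_mul_one_add_sq (t x : ℝ) :
    ‖-(cexp (I * t * x) * (1 + x ^ 2))‖ = 1 + x ^ 2 := by
  rw [norm_neg, norm_mul, norm_cexp_I_mul_ofReal_mul, one_mul]
  exact_mod_cast Real.norm_of_nonneg (by positivity : (0 : ℝ) ≤ 1 + x ^ 2)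

lemma norm_KfunDeriv_zero_left_le (x : ℝ) : ‖KfunDeriv 0 x‖ ≤ 1 + x ^ 2 := by
  by_cases hx : x = 0
  · simp [KfunDeriv, hx]
  have hx2 : 0 < x ^ 2 := by positivity
  have hform : KfunDeriv 0 x = I * ((x - Real.sin x : ℝ) * ((1 + x ^ 2) / x ^ 2 : ℝ)) := by
    simp only [KfunDeriv, if_neg hx]
    push_cast
    simp only [mul_zero, zero_mul, Complex.exp_zero]
    ring
  rw [hform, norm_mul, norm_I, one_mul, ← ofReal_mul, norm_real, Real.norm_eq_abs, abs_mul,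
    abs_of_pos (by positivity : 0 < (1 + x ^ 2) / x ^ 2)]
  calc |x - Real.sin x| * ((1 + x ^ 2) / x ^ 2) ≤ x ^ 2 * ((1 + x ^ 2) / x ^ 2) := by
        gcongr; exact abs_sub_sin_le_sq x
  _ = 1 + x ^ 2 := by field_simp

lemma norm_KfunDeriv_le (t x : ℝ) : ‖KfunDeriv t x‖ ≤ (1 + |t|) * (1 + x ^ 2) := by
  have hlip : ‖KfunDeriv t x - KfunDeriv 0 x‖ ≤ (1 + x ^ 2) * ‖t - 0‖ :=
    convex_univ.norm_image_sub_le_of_norm_hasDerivWithin_le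
      (fun s _ => (hasDerivAt_KfunDeriv s x).hasDerivWithinAt)
      (fun s _ => (norm_neg_cexp_I_mul_ofReal_mul_one_add_sq s x).le) trivial trivial
  have h0 := norm_KfunDeriv_zero_left_le x
  rw [sub_zero, Real.norm_eq_abs] at hlip
  calc ‖KfunDeriv t x‖ ≤ ‖KfunDeriv t x - KfunDeriv 0 x‖ + ‖KfunDeriv 0 x‖ :=
        norm_le_norm_sub_add _ _
  _ ≤ (1 + |t|) * (1 + x ^ 2) := by linarith

lemma norm_Kfun_le (t x : ℝ) : ‖Kfun t x‖ ≤ (1 + |t|) * (1 + x ^ 2) * |t| := by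
  have h := (convex_closedBall (0 : ℝ) |t|).norm_image_sub_le_of_norm_hasDerivWithin_le
    (C := (1 + |t|) * (1 + x ^ 2))
    (fun s _ => (hasDerivAt_Kfun s x).hasDerivWithinAt)
    (fun s hs => (norm_KfunDeriv_le s x).trans ?_)
    (Metric.mem_closedBall_self (abs_nonneg t)) (by simp : t ∈ Metric.closedBall 0 |t|)
  · simpa [Kfun_zero_left] using h
  · have hs' : |s| ≤ |t| := by simpa using hs
    exact mul_le_mul_of_nonneg_right (by linarith) (by positivity)

lemma measurable_Kfun (t : ℝ) : Measurable (Kfun t) :=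
  Measurable.ite (measurableSet_singleton 0) measurable_const (by fun_prop)

lemma measurable_KfunDeriv (t : ℝ) : Measurable (KfunDeriv t) :=
  Measurable.ite (measurableSet_singleton 0) measurable_const (by fun_prop)

section Integral

variable {ν : Measure ℝ}

lemma hasDerivAt_integral_Kfun (hν : Integrable (fun x : ℝ => 1 + x ^ 2) ν)
    (t : ℝ) : HasDerivAt (fun s => ∫ x, Kfun s x ∂ν) (∫ x, KfunDeriv t x ∂ν) t := by
  have hbound : ∀ x, ∀ s ∈ Metric.ball t 1, ‖KfunDeriv s x‖ ≤ (2 + |t|) * (1 + x ^ 2) := by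
    intro x s hs
    have : |s - t| < 1 := by simpa [Real.dist_eq] using hs
    refine (norm_KfunDeriv_le s x).trans (mul_le_mul_of_nonneg_right ?_ (by positivity))
    linarith [abs_sub_abs_le_abs_sub s t]
  have hint : Integrable (Kfun t) ν :=
    (hν.const_mul ((1 + |t|) * |t|)).mono' (measurable_Kfun t).aestronglyMeasurable
      (.of_forall fun x => (norm_Kfun_le t x).trans_eq (by ring))
  exact (hasDerivAt_integral_of_dominated_loc_of_deriv_le (Metric.ball_mem_nhds t one_pos)
    (.of_forall fun s => (measurable_Kfun s).aestronglyMeasurable) hint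
    (measurable_KfunDeriv t).aestronglyMeasurable (.of_forall hbound) (hν.const_mul _)
    (.of_forall fun x s _ => hasDerivAt_Kfun s x)).2

lemma hasDerivAt_integral_KfunDeriv (hν : Integrable (fun x : ℝ => 1 + x ^ 2) ν)
    (t : ℝ) : HasDerivAt (fun s => ∫ x, KfunDeriv s x ∂ν)
      (∫ x, -(cexp (I * t * x) * (1 + x ^ 2)) ∂ν) t := by
  have hint : Integrable (KfunDeriv t) ν :=
    (hν.const_mul (1 + |t|)).mono' (measurable_KfunDeriv t).aestronglyMeasurable
      (.of_forall fun x => norm_KfunDeriv_le t x)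
  exact (hasDerivAt_integral_of_dominated_loc_of_deriv_le (Metric.ball_mem_nhds t one_pos)
    (.of_forall fun s => (measurable_KfunDeriv s).aestronglyMeasurable) hint
    (by fun_prop)
    (.of_forall fun x s _ => (norm_neg_cexp_I_mul_ofReal_mul_one_add_sq s x).le) hν
    (.of_forall fun x s _ => hasDerivAt_KfunDeriv s x)).2

end Integral

lemma hasDerivAt_sInt {G : SignedMeasure ℝ} {F : ℝ → ℝ → ℂ} {F' : ℝ → ℂ} {t : ℝ}
    (hmom : Integrable (fun x : ℝ => 1 + x ^ 2) G.totalVariation)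
    (hF : ∀ ν : Measure ℝ, Integrable (fun x : ℝ => 1 + x ^ 2) ν →
      HasDerivAt (fun s => ∫ x, F s x ∂ν) (∫ x, F' x ∂ν) t) :
    HasDerivAt (fun s => sInt G (F s)) (sInt G F') t := by
  obtain ⟨hpos, hneg⟩ := integrable_add_measure.mp hmom
  exact (hF _ hpos).sub (hF _ hneg)

lemma sInt_neg (G : SignedMeasure ℝ) (φ : ℝ → ℂ) :
    sInt G (fun x => -φ x) = -sInt G φ := by
  simp only [sInt, integral_neg]
  ring

theorem secondDeriv_of_hasLK_general (g : ℝ → ℂ)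
    (γ : ℝ) (G : MeasureTheory.SignedMeasure ℝ) (hLK : HasLK g γ G)
    (hmom : MeasureTheory.Integrable (fun x : ℝ => 1 + x ^ 2) G.totalVariation) :
    ∃ g' : ℝ → ℂ, (∀ t : ℝ, HasDerivAt g (g' t) t) ∧
      ∀ t : ℝ, HasDerivAt g'
        (-sInt G (fun x => Complex.exp (Complex.I * t * x) * (1 + (x : ℂ) ^ 2))) t := by
  refine ⟨fun t => I * γ + sInt G (KfunDeriv t), fun t => ?_, fun t => ?_⟩
  · have hlin : HasDerivAt (fun s : ℝ => I * s * γ) (I * γ) t := by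
      simpa using ((hasDerivAt_id t).ofReal_comp.const_mul I).mul_const (γ : ℂ)
    rw [show g = fun s : ℝ => I * s * γ + sInt G (Kfun s) from funext hLK]
    exact hlin.add (hasDerivAt_sInt hmom fun _ hν => hasDerivAt_integral_Kfun hν t)
  · have h := (hasDerivAt_sInt hmom fun _ hν => hasDerivAt_integral_KfunDeriv hν t).const_add
      (I * γ)
    rwa [sInt_neg] at h

/-- if `f` has a Lévy–Khinchine representation with pair `(γ, G)` and
`∫ (1+x²) d|G|(x) < ∞`, then `Ln f` is twice differentiable with
`(Ln f)''(t) = -∫ e^{itx}(1+x²) dG(x)`. -/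
theorem secondDeriv_of_hasLK (μ : MeasureTheory.Measure ℝ)
    [MeasureTheory.IsProbabilityMeasure μ]
    (g : ℝ → ℂ) (hf : ∀ t : ℝ, _root_.charFun μ t ≠ 0)
    (hg : IsDistinguishedLog g (_root_.charFun μ))
    (γ : ℝ) (G : MeasureTheory.SignedMeasure ℝ) (hLK : HasLK g γ G)
    (hmom : MeasureTheory.Integrable (fun x : ℝ => 1 + x ^ 2) G.totalVariation) :
    ∃ g' : ℝ → ℂ, (∀ t : ℝ, HasDerivAt g (g' t) t) ∧
      ∀ t : ℝ, HasDerivAt g'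
        (-sInt G (fun x => Complex.exp (Complex.I * t * x) * (1 + (x : ℂ) ^ 2))) t :=
  secondDeriv_of_hasLK_general g γ G hLK hmom
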